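/- Let s ≥ 2 and work over P = ℤ[T_1,…,T_s,B_1,…,B_s]. Let 𝒜 be an s-element set of rows of the matrix consisting of the rows of N_s(T_1,…,T_s) together with the row (B_1,…,B_s), let N_𝒜 be the s×s matrix formed by the rows in 𝒜, and let G_𝒜 be the simple graph on {1,…,s} whose edges are the pairs (l,l') indexing rows in 𝒜. If G_𝒜 is a tree, then det(N_𝒜) = ± (Σ_{l=1}^s B_l T_l) · T_1^{deg(1)−1}⋯T_s^{deg(s)−1}, where deg(l) is the degree of the vertex l in G_𝒜; i.e., for any ordering of the rows there is a sign ε ∈ {1,−1} with det(N_𝒜) = ε·(Σ_{l=1}^s B_l T_l)·∏_{l=1}^s T_l^{deg(l)−1}. -/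

import Mathlib

/-!
Root the tree `G_𝒜` at a vertex `c` and let `p v` be a neighbour of `v ≠ c` that is closer to `c`.
As `G_𝒜` has `s - 1` edges, these are exactly the edges `{v, p v}`, so the rows of `N_𝒜` can be
indexed by the vertices: `c` gets the `B`-row and `v ≠ c` the row of `{v, p v}`. Every edge row is
orthogonal to `T = (T_l)`, so by Cramer's rule `det N_𝒜 · T_c` is the determinant of `N_𝒜` with
column `c` replaced by `N_𝒜 T = (∑ B_l T_l) e_c`. Ordering the vertices by their distance to `c`,
with `c` last, makes that matrix triangular with diagonal entries `±T_{p v}`. Finally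
`∏_{v ≠ c} T_v T_{p v} = ∏_l T_l ^ deg l`, both sides being products over the edges.
-/

open Finset Matrix

namespace Matrix
variable {m R α : Type*} [Fintype m] [DecidableEq m] [CommRing R] [LinearOrder α]

theorem det_eq_prod_diag_of_lt (M : Matrix m m R) (b : m → α)
    (h : ∀ i j, i ≠ j → M i j ≠ 0 → b j < b i) : M.det = ∏ i, M i i := by
  rw [det_apply, sum_eq_single 1]
  · simp
  · intro σ _ hσ
    suffices ∃ i, M (σ i) i = 0 by
      obtain ⟨i, hi⟩ := this
      rw [prod_eq_zero (f := fun j => M (σ j) j) (mem_univ i) hi, smul_zero]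
    by_contra! hne
    have hsupp : (univ.filter fun i => σ i ≠ i).Nonempty := by
      obtain ⟨i, hi⟩ := not_forall.mp (mt Equiv.ext hσ)
      exact ⟨i, by simpa using hi⟩
    obtain ⟨i, hi, hmax⟩ := exists_max_image _ b hsupp
    have hi' : σ i ≠ i := (mem_filter.mp hi).2
    have hlt : b i < b (σ i) := h _ _ hi' (hne i)
    have : σ (σ i) ≠ σ i := fun h' => hi' (σ.injective h')
    exact (hmax (σ i) (by simpa using this)).not_gt hlt
  · simp

theorem det_mul_apply_eq_mulVec_mul_prod_erase {c : m} (A : Matrix m m R) (x : m → R) (d : m → ℕ)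
    (hx : ∀ v ≠ c, (A *ᵥ x) v = 0)
    (hA : ∀ v ≠ c, ∀ u, u ≠ v → u ≠ c → A v u ≠ 0 → d u < d v) :
    A.det * x c = (A *ᵥ x) c * ∏ v ∈ univ.erase c, A v v := by
  have hcramer : A.det * x c = (A.updateCol c (A *ᵥ x)).det := by
    rw [← cramer_apply, cramer_eq_adjugate_mulVec, mulVec_mulVec, adjugate_mul, smul_mulVec,
      one_mulVec, Pi.smul_apply, smul_eq_mul]
  let b : m → WithTop ℕ := fun u => if u = c then ⊤ else d u
  rw [hcramer, det_eq_prod_diag_of_lt _ b, ← mul_prod_erase _ _ (mem_univ c)]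
  · congr 1
    · simp
    · refine prod_congr rfl fun v hv => ?_
      simp [updateCol_ne (ne_of_mem_erase hv)]
  · intro v u hvu hA'
    by_cases hu : u = c
    · subst hu
      simp only [updateCol_self] at hA'
      exact absurd (hx v hvu) hA'
    rw [updateCol_ne hu] at hA'
    by_cases hv : v = c
    · simp [b, hu, hv]
    · simpa [b, hu, hv] using hA v hv u (Ne.symm hvu) hu hA'

end Matrix

theorem injOn_sym2_mk_of_lt {V : Type*} {c : V} {p : V → V} {d : V → ℕ}
    (hp : ∀ v ≠ c, d (p v) < d v) : Set.InjOn (fun v => s(v, p v)) {v | v ≠ c} := by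
  intro v hv w hw h
  rcases Sym2.eq_iff.mp h with ⟨hvw, -⟩ | ⟨hvp, hpv⟩
  · exact hvw
  · have hlt_v := hp v hv
    have hlt_w := hp w hw
    rw [hpv] at hlt_v
    rw [← hvp] at hlt_w
    omega

namespace SimpleGraph
variable {V : Type*} {G : SimpleGraph V}

theorem ncard_neighborSet_eq_degree (v : V) [Fintype (G.neighborSet v)] :
    (G.neighborSet v).ncard = G.degree v := by
  rw [← Nat.card_coe_set_eq, Nat.card_eq_fintype_card, card_neighborSet_eq_degree]

theorem Connected.exists_parent (hG : G.Connected) (c : V) :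
    ∃ p : V → V, ∀ v ≠ c, G.Adj v (p v) ∧ G.dist (p v) c < G.dist v c := by
  have : ∀ v, ∃ w, v ≠ c → G.Adj v w ∧ G.dist w c < G.dist v c := by
    intro v
    obtain ⟨q, hq⟩ := hG.exists_walk_length_eq_dist v c
    cases q with
    | nil => exact ⟨c, fun h => absurd rfl h⟩
    | cons h q =>
      rw [Walk.length_cons] at hq
      exact ⟨_, fun _ => ⟨h, (dist_le q).trans_lt (by omega)⟩⟩
  exact ⟨_, fun v => (this v).choose_spec⟩

variable [Fintype V] [DecidableRel G.Adj]

theorem prod_pow_degree_eq_prod_edgeFinset {M : Type*} [CommMonoid M] (f : V → M) :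
    ∏ v, f v ^ G.degree v = ∏ e ∈ G.edgeFinset, (e.toMultiset.map f).prod := by
  classical
  calc ∏ v, f v ^ G.degree v = ∏ v, ∏ d ∈ univ.filter (fun d : G.Dart => d.fst = v), f d.fst := by
        refine prod_congr rfl fun v _ => ?_
        rw [prod_congr rfl fun d hd => congrArg f (mem_filter.mp hd).2, prod_const]
        congr 1
        convert (G.dart_fst_fiber_card_eq_degree v).symm
    _ = ∏ d : G.Dart, f d.fst := prod_fiberwise _ _ _
    _ = ∏ e ∈ G.edgeFinset, ∏ d ∈ univ.filter (fun d : G.Dart => d.edge = e), f d.fst :=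
        (prod_fiberwise_of_maps_to (fun d _ => by simp) _).symm
    _ = ∏ e ∈ G.edgeFinset, (e.toMultiset.map f).prod := by
        refine prod_congr rfl fun e he => ?_
        induction e using Sym2.ind with | _ a b => ?_
        let d : G.Dart := ⟨(a, b), by simpa using he⟩
        rw [← Dart.edge_mk (p := (a, b)) d.adj, Dart.edge_fiber, prod_pair d.symm_ne.symm]
        simp [d, Sym2.toMultiset]

variable [DecidableEq V]

theorem IsTree.image_sym2_mk_eq_edgeFinset (hG : G.IsTree) {c : V} {p : V → V} {d : V → ℕ}
    (hadj : ∀ v ≠ c, G.Adj v (p v)) (hp : ∀ v ≠ c, d (p v) < d v) :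
    (univ.erase c).image (fun v => s(v, p v)) = G.edgeFinset := by
  refine eq_of_subset_of_card_le (fun e he => ?_) ?_
  · obtain ⟨v, hv, rfl⟩ := mem_image.mp he
    simpa using hadj v (ne_of_mem_erase hv)
  · rw [card_image_of_injOn fun v hv w hw => injOn_sym2_mk_of_lt hp (ne_of_mem_erase hv)
      (ne_of_mem_erase hw), card_erase_of_mem (mem_univ c), card_univ, ← hG.card_edgeFinset]
    simp

theorem IsTree.prod_pow_degree_eq_prod_parent {M : Type*} [CommMonoid M] (hG : G.IsTree)
    {c : V} {p : V → V} {d : V → ℕ} (hadj : ∀ v ≠ c, G.Adj v (p v))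
    (hp : ∀ v ≠ c, d (p v) < d v) (f : V → M) :
    ∏ v, f v ^ G.degree v = ∏ v ∈ univ.erase c, f v * f (p v) := by
  rw [prod_pow_degree_eq_prod_edgeFinset, ← hG.image_sym2_mk_eq_edgeFinset hadj hp,
    prod_image fun v hv w hw => injOn_sym2_mk_of_lt hp (ne_of_mem_erase hv) (ne_of_mem_erase hw)]
  simp [Sym2.toMultiset]

end SimpleGraph

section Koszul
variable {V R : Type*} [LinearOrder V] [CommRing R]

/-- `N_s(T)` with the row `B` appended as the row `Sum.inr ()`. -/
def koszulMatrix (T B : V → R) : Matrix ({p : V × V // p.1 < p.2} ⊕ Unit) V R :=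
  Matrix.of fun r c =>
    match r with
    | Sum.inl q => if c = q.1.1 then -(T q.1.2) else if c = q.1.2 then T q.1.1 else 0
    | Sum.inr _ => B c

/-- The graph `G_𝒜` of the rows `𝒜` selected by `r`. -/
def rowGraph {ι : Type*} (r : ι → {p : V × V // p.1 < p.2} ⊕ Unit) : SimpleGraph V :=
  SimpleGraph.fromRel fun l l' => ∃ (i : ι) (h : l < l'), r i = Sum.inl ⟨(l, l'), h⟩

theorem eq_of_sym2_mk_eq {q q' : {p : V × V // p.1 < p.2}}
    (h : s(q.1.1, q.1.2) = s(q'.1.1, q'.1.2)) : q = q' := by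
  rcases Sym2.eq_iff.mp h with ⟨h₁, h₂⟩ | ⟨h₁, h₂⟩
  · exact Subtype.ext (Prod.ext h₁ h₂)
  · exact absurd (h₁ ▸ h₂ ▸ q.2) (lt_asymm q'.2)

theorem rowGraph_adj {ι : Type*} {r : ι → {p : V × V // p.1 < p.2} ⊕ Unit} {a b : V} :
    (rowGraph r).Adj a b ↔ ∃ i q, r i = Sum.inl q ∧ s(q.1.1, q.1.2) = s(a, b) := by
  constructor
  · rintro ⟨-, ⟨i, h, hi⟩ | ⟨i, h, hi⟩⟩
    · exact ⟨i, _, hi, rfl⟩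
    · exact ⟨i, _, hi, Sym2.eq_swap⟩
  · rintro ⟨i, ⟨⟨a', b'⟩, h⟩, hi, hq⟩
    rcases Sym2.eq_iff.mp hq with ⟨rfl, rfl⟩ | ⟨rfl, rfl⟩
    · exact ⟨h.ne, Or.inl ⟨i, h, hi⟩⟩
    · exact ⟨h.ne', Or.inr ⟨i, h, hi⟩⟩

theorem koszulMatrix_inl (T B : V → R) (q : {p : V × V // p.1 < p.2}) :
    koszulMatrix T B (Sum.inl q) = Pi.single q.1.1 (-T q.1.2) + Pi.single q.1.2 (T q.1.1) := by
  ext u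
  by_cases ha : u = q.1.1
  · subst ha
    simp [koszulMatrix, q.2.ne]
  · by_cases hb : u = q.1.2
    · subst hb
      simp [koszulMatrix, q.2.ne']
    · simp [koszulMatrix, ha, hb]

theorem koszulMatrix_inl_apply_ne_zero {T B : V → R} {q : {p : V × V // p.1 < p.2}} {u : V}
    (h : koszulMatrix T B (Sum.inl q) u ≠ 0) : u ∈ s(q.1.1, q.1.2) := by
  by_contra hu
  simp only [Sym2.mem_iff, not_or] at hu
  simp [koszulMatrix_inl, hu.1, hu.2] at h

theorem koszulMatrix_inl_apply_eq_units_smul (T B : V → R) {q : {p : V × V // p.1 < p.2}}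
    {v w : V} (h : s(q.1.1, q.1.2) = s(v, w)) :
    ∃ ε : ℤˣ, koszulMatrix T B (Sum.inl q) v = ε • T w := by
  rcases Sym2.eq_iff.mp h with ⟨rfl, rfl⟩ | ⟨rfl, rfl⟩
  · exact ⟨-1, by simp [koszulMatrix]⟩
  · exact ⟨1, by simp [koszulMatrix, q.2.ne']⟩

variable [Fintype V]

theorem koszulMatrix_mulVec_inl (T B : V → R) (q : {p : V × V // p.1 < p.2}) :
    (koszulMatrix T B *ᵥ T) (Sum.inl q) = 0 := by
  rw [mulVec, koszulMatrix_inl, add_dotProduct, single_dotProduct, single_dotProduct]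
  ring

theorem koszulMatrix_mulVec_inr (T B : V → R) (u : Unit) :
    (koszulMatrix T B *ᵥ T) (Sum.inr u) = ∑ l, B l * T l := rfl

theorem exists_apply_eq_inr_of_isTree {r : V → {p : V × V // p.1 < p.2} ⊕ Unit}
    (hr : Function.Injective r) (hG : (rowGraph r).IsTree) : ∃ i, r i = Sum.inr () := by
  classical
  by_contra! h
  have : ∀ i, ∃ q, r i = Sum.inl q := fun i => by
    cases hri : r i with
    | inl q => exact ⟨q, rfl⟩
    | inr u => exact absurd hri (h i)
  choose q hq using this
  have hle := card_le_card_of_injOn (s := univ) (t := (rowGraph r).edgeFinset)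
    (fun i => s((q i).1.1, (q i).1.2))
    (fun i _ => by simpa using rowGraph_adj.mpr ⟨i, q i, hq i, rfl⟩)
    (fun i _ j _ hij => hr (by rw [hq, hq, eq_of_sym2_mk_eq hij]))
  have := hG.card_edgeFinset
  simp only [card_univ] at hle
  omega

theorem exists_equiv_rows_of_isTree {r : V → {p : V × V // p.1 < p.2} ⊕ Unit}
    (hr : Function.Injective r) (hG : (rowGraph r).IsTree) {c : V} {p : V → V} {d : V → ℕ}
    (hadj : ∀ v ≠ c, (rowGraph r).Adj v (p v)) (hp : ∀ v ≠ c, d (p v) < d v) :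
    ∃ e : V ≃ V, r (e c) = Sum.inr () ∧
      ∀ v ≠ c, ∃ q, r (e v) = Sum.inl q ∧ s(q.1.1, q.1.2) = s(v, p v) := by
  obtain ⟨i₀, hi₀⟩ := exists_apply_eq_inr_of_isTree hr hG
  have : ∀ v, ∃ i, (v = c → r i = Sum.inr ()) ∧
      (v ≠ c → ∃ q, r i = Sum.inl q ∧ s(q.1.1, q.1.2) = s(v, p v)) := by
    intro v
    by_cases hv : v = c
    · exact ⟨i₀, fun _ => hi₀, fun h => absurd hv h⟩
    · obtain ⟨i, hi⟩ := rowGraph_adj.mp (hadj v hv)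
      exact ⟨i, fun h => absurd h hv, fun _ => hi⟩
  choose ψ hψc hψ using this
  have hψinj : Function.Injective ψ := by
    intro v w hvw
    by_cases hv : v = c <;> by_cases hw : w = c
    · rw [hv, hw]
    · obtain ⟨q, hq, -⟩ := hψ w hw
      have := hψc v hv
      rw [hvw, hq] at this
      cases this
    · obtain ⟨q, hq, -⟩ := hψ v hv
      have := hψc w hw
      rw [← hvw, hq] at this
      cases this
    · obtain ⟨q, hq, hqv⟩ := hψ v hv
      obtain ⟨q', hq', hqw⟩ := hψ w hw
      rw [hvw, hq'] at hq
      cases hq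
      exact injOn_sym2_mk_of_lt hp hv hw (hqv.symm.trans hqw)
  exact ⟨Equiv.ofBijective ψ (Finite.injective_iff_bijective.mp hψinj), hψc c rfl, hψ⟩

theorem det_koszulMatrix_submatrix_mul_apply (T B : V → R) {c : V} {p : V → V} {d : V → ℕ}
    (hp : ∀ v ≠ c, d (p v) < d v) (ρ : V → {p : V × V // p.1 < p.2} ⊕ Unit)
    (hc : ρ c = Sum.inr ()) (hρ : ∀ v ≠ c, ∃ q, ρ v = Sum.inl q ∧ s(q.1.1, q.1.2) = s(v, p v)) :
    ((koszulMatrix T B).submatrix ρ id).det * T c =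
      (∑ l, B l * T l) * ∏ v ∈ univ.erase c, koszulMatrix T B (ρ v) v := by
  have hmulVec : ∀ v, ((koszulMatrix T B).submatrix ρ id *ᵥ T) v =
      (koszulMatrix T B *ᵥ T) (ρ v) := fun _ => rfl
  rw [det_mul_apply_eq_mulVec_mul_prod_erase _ T d, hmulVec, hc, koszulMatrix_mulVec_inr]
  · rfl
  · intro v hv
    obtain ⟨q, hq, -⟩ := hρ v hv
    rw [hmulVec, hq, koszulMatrix_mulVec_inl]
  · intro v hv u huv _ hvu
    obtain ⟨q, hq, hqv⟩ := hρ v hv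
    have hu := koszulMatrix_inl_apply_ne_zero (hq ▸ hvu : koszulMatrix T B (Sum.inl q) u ≠ 0)
    rw [hqv, Sym2.mem_iff] at hu
    rcases hu with rfl | rfl
    · exact absurd rfl huv
    · exact hp v hv

theorem det_koszulMatrix_submatrix_of_parent [IsDomain R] [Nontrivial V]
    (T B : V → R) (hT : ∀ l, T l ≠ 0) {G : SimpleGraph V} [DecidableRel G.Adj] (hG : G.IsTree)
    {c : V} {p : V → V} {d : V → ℕ} (hadj : ∀ v ≠ c, G.Adj v (p v))
    (hp : ∀ v ≠ c, d (p v) < d v) (ρ : V → {p : V × V // p.1 < p.2} ⊕ Unit)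
    (hc : ρ c = Sum.inr ()) (hρ : ∀ v ≠ c, ∃ q, ρ v = Sum.inl q ∧ s(q.1.1, q.1.2) = s(v, p v)) :
    ∃ ε : ℤˣ, ((koszulMatrix T B).submatrix ρ id).det =
      ε • ((∑ l, B l * T l) * ∏ l, T l ^ (G.degree l - 1)) := by
  have hdiag : ∀ v ≠ c, ∃ ε : ℤˣ, koszulMatrix T B (ρ v) v = ε • T (p v) := fun v hv => by
    obtain ⟨q, hq, hqv⟩ := hρ v hv
    rw [hq]
    exact koszulMatrix_inl_apply_eq_units_smul T B hqv
  choose! ε hε using hdiag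
  have hkey := det_koszulMatrix_submatrix_mul_apply T B hp ρ hc hρ
  rw [prod_congr rfl fun v hv => hε v (ne_of_mem_erase hv), prod_smul] at hkey
  have hdeg : ∏ v ∈ univ.erase c, T v * T (p v) = (∏ l, T l ^ (G.degree l - 1)) * ∏ l, T l := by
    rw [← hG.prod_pow_degree_eq_prod_parent hadj hp, ← prod_mul_distrib]
    exact prod_congr rfl fun l _ =>
      (pow_sub_one_mul (hG.connected.preconnected.degree_pos_of_nontrivial l).ne' _).symm
  refine ⟨∏ v ∈ univ.erase c, ε v,
    mul_right_cancel₀ (b := ∏ l, T l) (prod_ne_zero_iff.mpr fun l _ => hT l) ?_⟩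
  rw [smul_mul_assoc, mul_assoc, ← hdeg, ← mul_prod_erase _ _ (mem_univ c), ← mul_assoc, hkey,
    prod_mul_distrib]
  simp only [Units.smul_def, zsmul_eq_mul]
  ring

theorem det_koszulMatrix_submatrix_of_isTree [IsDomain R] [Nontrivial V] (T B : V → R)
    (hT : ∀ l, T l ≠ 0) {r : V → {p : V × V // p.1 < p.2} ⊕ Unit} (hr : Function.Injective r)
    (hG : (rowGraph r).IsTree) [DecidableRel (rowGraph r).Adj] :
    ∃ ε : ℤˣ, ((koszulMatrix T B).submatrix r id).det =
      ε • ((∑ l, B l * T l) * ∏ l, T l ^ ((rowGraph r).degree l - 1)) := by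
  obtain ⟨c⟩ := hG.connected.nonempty
  obtain ⟨p, hp⟩ := hG.connected.exists_parent c
  have hadj : ∀ v ≠ c, (rowGraph r).Adj v (p v) := fun v hv => (hp v hv).1
  let d v := (rowGraph r).dist v c
  have hd : ∀ v ≠ c, d (p v) < d v := fun v hv => (hp v hv).2
  obtain ⟨e, hc, he⟩ := exists_equiv_rows_of_isTree hr hG hadj hd
  obtain ⟨ε, hε⟩ := det_koszulMatrix_submatrix_of_parent T B hT hG hadj hd (r ∘ e) hc he
  refine ⟨Equiv.Perm.sign e * ε, ?_⟩
  have hperm := det_permute e ((koszulMatrix T B).submatrix r id)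
  rw [submatrix_submatrix, Function.comp_id, hε] at hperm
  rw [mul_smul, hperm, Units.smul_def, zsmul_eq_mul, ← mul_assoc, ← Int.cast_mul, ← Units.val_mul,
    Int.units_mul_self, Units.val_one, Int.cast_one, one_mul]

end Koszul

theorem det_eq_tree_formula_of_isTree
    (s : ℕ) (hs : 2 ≤ s) :
    letI P := MvPolynomial (Fin s ⊕ Fin s) ℤ
    letI T : Fin s → P := fun l => MvPolynomial.X (Sum.inl l)
    letI B : Fin s → P := fun l => MvPolynomial.X (Sum.inr l)
    letI ρ := {p : Fin s × Fin s // p.1 < p.2} ⊕ Unit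
    letI H : Matrix ρ (Fin s) P := Matrix.of fun r c =>
      match r with
      | Sum.inl q => if c = q.1.1 then -(T q.1.2) else if c = q.1.2 then T q.1.1 else 0
      | Sum.inr _ => B c
    ∀ r : Fin s → ρ, Function.Injective r →
      ∀ G : SimpleGraph (Fin s),
        G = (SimpleGraph.fromRel fun l l' : Fin s =>
          ∃ (i : Fin s) (h : l < l'), r i = Sum.inl ⟨(l, l'), h⟩) →
        G.IsTree →
        ∃ ε : ℤ, (ε = 1 ∨ ε = -1) ∧
          (H.submatrix r id).det =
            (ε : P) * ((∑ l, B l * T l) * ∏ l, T l ^ ((G.neighborSet l).ncard - 1)) := by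
  intro r hr G hG htree
  subst hG
  classical
  have : Nontrivial (Fin s) := Fin.nontrivial_iff_two_le.mpr hs
  obtain ⟨ε, hε⟩ := det_koszulMatrix_submatrix_of_isTree (R := MvPolynomial (Fin s ⊕ Fin s) ℤ)
    (fun l => MvPolynomial.X (Sum.inl l)) (fun l => MvPolynomial.X (Sum.inr l))
    (fun l => MvPolynomial.X_ne_zero _) hr htree
  refine ⟨ε, (Int.units_eq_one_or ε).imp (congrArg _) (congrArg _), Eq.trans ?_ (hε.trans ?_)⟩
  · -- `H` is `koszulMatrix T B` only up to the order and decidability instances of `Fin s`.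
    congr 2
    ext (q | u) c <;> simp [koszulMatrix]
  · simp only [← SimpleGraph.ncard_neighborSet_eq_degree, Units.smul_def, zsmul_eq_mul]
    rfl
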